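/- arXiv:1612.00769 — 2 statements merged into one kernel-verified Lean document; each statement's English description precedes it below -/
import Mathlib

section
/- For the block matrix M = [[I, cL], [-dL, I]] with c, d > 0 and L a symmetric positive semidefinite real matrix, M is invertible. -/
open Matrix

/- The Schur complement of the identity block is `1 + c d L²`, and for symmetric `L` this is
`1 + c d LᵀL`, which is positive definite as soon as `c d ≥ 0`. -/

namespace Matrix

variable {m n K : Type*} [Fintype m] [DecidableEq m] [Fintype n] [DecidableEq n]

theorem isUnit_fromBlocks_one₁₁_iff [CommRing K] (B : Matrix m n K) (C : Matrix n m K)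
    (D : Matrix n n K) : IsUnit (fromBlocks 1 B C D) ↔ IsUnit (D - C * B) := by
  rw [isUnit_iff_isUnit_det, isUnit_iff_isUnit_det, det_fromBlocks_one₁₁]

theorem isUnit_one_add_smul_conjTranspose_mul_self [Field K] [PartialOrder K] [StarRing K]
    [StarOrderedRing K] (A : Matrix n n K) {t : K} (ht : 0 ≤ t) :
    IsUnit (1 + t • (Aᴴ * A)) :=
  (PosDef.one.add_posSemidef ((posSemidef_conjTranspose_mul_self A).smul ht)).isUnit

end Matrix

theorem block_matrix_invertible_of_psd_general (n : ℕ) (L : Matrix (Fin n) (Fin n) ℝ)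
    (hsym : L.transpose = L)
    (c d : ℝ) (hc : 0 < c) (hd : 0 < d) :
    IsUnit (Matrix.fromBlocks 1 (c • L) (-(d • L)) (1 : Matrix (Fin n) (Fin n) ℝ)) := by
  have hschur : 1 - -(d • L) * (c • L) = 1 + (d * c) • (Lᴴ * L) := by
    rw [conjTranspose_eq_transpose_of_trivial, hsym, neg_mul, sub_neg_eq_add, smul_mul_smul_comm]
  rw [isUnit_fromBlocks_one₁₁_iff, hschur]
  exact isUnit_one_add_smul_conjTranspose_mul_self L (mul_pos hd hc).le

theorem block_matrix_invertible_of_psd (n : ℕ) (L : Matrix (Fin n) (Fin n) ℝ)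
    (hsym : L.transpose = L) (hpsd : ∀ x : Fin n → ℝ, 0 ≤ x ⬝ᵥ L.mulVec x)
    (c d : ℝ) (hc : 0 < c) (hd : 0 < d) :
    IsUnit (Matrix.fromBlocks 1 (c • L) (-(d • L)) (1 : Matrix (Fin n) (Fin n) ℝ)) :=
  block_matrix_invertible_of_psd_general n L hsym c d hc hd
end

section
/- For c, d > 0 and L symmetric PSD with spectral decomposition, the eigenvalues of the block matrix [[I, cL],[-dL, I]] are 1 ± i√(cd)·λ over ℂ, where λ ranges over eigenvalues of L; consequently every eigenvalue has real part 1 and the matrix is invertible. -/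
/-!
Put `w = i√(cd)`, so that `w² = -cd`. The invertible matrix `V = [[c, c], [w, -w]]` (blocks are
scalar multiples of `I`) satisfies `M V = V · diag(1 + wL, 1 - wL)`, hence
`σ(M) = (1 + w σ(L)) ∪ (1 - w σ(L))`. As `L` is symmetric, its complex spectrum is its real
spectrum, so every eigenvalue of `M` has real part `1`; in particular `0 ∉ σ(M)`.
-/

open Matrix

lemma spectrum_eq_of_isUnit_of_semiconjBy {R A : Type*} [CommSemiring R] [Ring A] [Algebra R A]
    {a b v : A} (hv : IsUnit v) (h : SemiconjBy v b a) : spectrum R a = spectrum R b := by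
  obtain ⟨u, rfl⟩ := hv
  rw [(Units.eq_mul_inv_iff_mul_eq u).mpr h.eq.symm, spectrum.units_conjugate]

lemma spectrum_one_add_smul {K A : Type*} [Field K] [Ring A] [Algebra K A] (a : A) {w : K}
    (hw : w ≠ 0) : spectrum K (1 + w • a) = (fun z => 1 + w * z) '' spectrum K a := by
  rw [← map_one (algebraMap K A), ← spectrum.singleton_add_eq, ← Units.smul_mk0 hw,
    spectrum.unit_smul_eq_smul, Set.singleton_add, ← Set.image_smul, Set.image_image]
  rfl

namespace Matrix

variable {m n K : Type*} [Fintype m] [Fintype n] [DecidableEq m] [DecidableEq n]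

lemma spectrum_fromBlocks_zero₂₁_zero₁₂ [CommRing K] (A : Matrix m m K) (D : Matrix n n K) :
    spectrum K (fromBlocks A 0 0 D) = spectrum K A ∪ spectrum K D := by
  ext z
  have hsub : algebraMap K _ z - fromBlocks A 0 0 D =
      fromBlocks (algebraMap K _ z - A) 0 0 (algebraMap K _ z - D) := by
    simp only [Algebra.algebraMap_eq_smul_one, ← fromBlocks_one, fromBlocks_smul, smul_zero,
      sub_eq_add_neg, fromBlocks_neg, fromBlocks_add, neg_zero, add_zero]
  simp only [Set.mem_union, spectrum.mem_iff, hsub, isUnit_iff_isUnit_det _,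
    det_fromBlocks_zero₂₁, IsUnit.mul_iff, not_and_or]

lemma map_mem_spectrum_map_iff {F : Type*} [Field K] [Field F] (f : K →+* F)
    (A : Matrix n n K) (r : K) : f r ∈ spectrum F (A.map f) ↔ r ∈ spectrum K A := by
  rw [mem_spectrum_iff_isRoot_charpoly, mem_spectrum_iff_isRoot_charpoly, charpoly_map,
    Polynomial.IsRoot, Polynomial.eval_map_apply, map_eq_zero_iff f f.injective, Polynomial.IsRoot]

lemma spectrum_map_ofReal {L : Matrix n n ℝ} (hL : L.IsSymm) :
    spectrum ℂ (L.map Complex.ofReal) = Complex.ofReal '' spectrum ℝ L := by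
  have hH : (L.map Complex.ofReal).IsHermitian :=
    (isHermitian_iff_isSymm.mpr hL).map _ fun r => (Complex.conj_ofReal r).symm
  ext z
  constructor
  · intro hz
    obtain ⟨r, rfl⟩ : ∃ r : ℝ, (r : ℂ) = z := by
      rw [hH.spectrum_eq_image_range] at hz
      obtain ⟨_, ⟨i, rfl⟩, rfl⟩ := hz
      exact ⟨_, rfl⟩
    exact ⟨r, (map_mem_spectrum_map_iff Complex.ofRealHom L r).mp hz, rfl⟩
  · rintro ⟨r, hr, rfl⟩
    exact (map_mem_spectrum_map_iff Complex.ofRealHom L r).mpr hr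

section Coupled

variable [Field K] (A : Matrix n n K) {p q w : K}

lemma semiconjBy_fromBlocks (hw : w * w = -(p * q)) :
    SemiconjBy (fromBlocks (p • 1) (p • 1) (w • 1) (-(w • 1)))
      (fromBlocks (1 + w • A) 0 0 (1 - w • A)) (fromBlocks 1 (p • A) (-(q • A)) 1) := by
  rw [SemiconjBy, fromBlocks_multiply, fromBlocks_multiply]
  congr 1 <;>
    simp only [Matrix.mul_one, Matrix.one_mul, Matrix.mul_smul, Matrix.smul_mul, Matrix.mul_zero,
      add_zero, zero_add, Matrix.neg_mul, Matrix.mul_neg, smul_smul, Matrix.mul_sub,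
      Matrix.mul_add] <;>
    match_scalars <;> grind

lemma isUnit_fromBlocks_smul_one [NeZero (2 : K)] (hp : p ≠ 0) (hw : w ≠ 0) :
    IsUnit (fromBlocks (p • 1) (p • 1) (w • 1) (-(w • 1)) : Matrix (n ⊕ n) (n ⊕ n) K) := by
  have h2 : (2 : K) ≠ 0 := two_ne_zero
  rw [isUnit_iff_isUnit_det]
  refine isUnit_det_of_right_inverse (B := fromBlocks ((2 * p)⁻¹ • 1) ((2 * w)⁻¹ • 1)
    ((2 * p)⁻¹ • 1) (-((2 * w)⁻¹ • 1))) ?_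
  rw [fromBlocks_multiply, ← fromBlocks_one]
  congr 1 <;>
    simp only [Matrix.mul_one, Matrix.mul_smul, Matrix.mul_neg, smul_smul] <;>
    match_scalars <;> field_simp <;> ring

lemma spectrum_fromBlocks_one_smul_neg_smul_one [NeZero (2 : K)] (hp : p ≠ 0) (hw0 : w ≠ 0)
    (hw : w * w = -(p * q)) :
    spectrum K (fromBlocks 1 (p • A) (-(q • A)) 1) =
      (fun z => 1 + w * z) '' spectrum K A ∪ (fun z => 1 - w * z) '' spectrum K A := by
  rw [spectrum_eq_of_isUnit_of_semiconjBy (isUnit_fromBlocks_smul_one hp hw0)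
      (semiconjBy_fromBlocks A hw), spectrum_fromBlocks_zero₂₁_zero₁₂, spectrum_one_add_smul A hw0,
    sub_eq_add_neg, ← neg_smul, spectrum_one_add_smul A (neg_ne_zero.mpr hw0)]
  simp only [neg_mul, ← sub_eq_add_neg]

end Coupled

end Matrix

theorem block_matrix_spectrum_general (n : ℕ) (L : Matrix (Fin n) (Fin n) ℝ)
    (hsym : L.transpose = L)
    (c d : ℝ) (hc : 0 < c) (hd : 0 < d) :
    let Lc : Matrix (Fin n) (Fin n) ℂ := L.map (Complex.ofReal)
    let M : Matrix (Fin n ⊕ Fin n) (Fin n ⊕ Fin n) ℂ :=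
      Matrix.fromBlocks 1 ((c : ℂ) • Lc) (-((d : ℂ) • Lc)) 1
    (∀ μ : ℂ, μ ∈ spectrum ℂ M ↔
        ∃ lam : ℝ, lam ∈ spectrum ℝ L ∧
          (μ = 1 + Complex.I * (Real.sqrt (c * d) * lam) ∨
           μ = 1 - Complex.I * (Real.sqrt (c * d) * lam))) ∧
      (0 : ℂ) ∉ spectrum ℂ M ∧ IsUnit M := by
  intro Lc M
  set w : ℂ := Complex.I * Real.sqrt (c * d)
  have hw : w * w = -(c * d) := by
    simp only [w, mul_mul_mul_comm, Complex.I_mul_I, ← Complex.ofReal_mul,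
      Real.mul_self_sqrt (mul_pos hc hd).le]
    push_cast
    ring
  have hw0 : w ≠ 0 :=
    mul_ne_zero Complex.I_ne_zero (by exact_mod_cast (Real.sqrt_pos.mpr (mul_pos hc hd)).ne')
  have hspec : ∀ μ : ℂ, μ ∈ spectrum ℂ M ↔
      ∃ lam ∈ spectrum ℝ L, μ = 1 + w * lam ∨ μ = 1 - w * lam := by
    intro μ
    rw [spectrum_fromBlocks_one_smul_neg_smul_one Lc (by exact_mod_cast hc.ne') hw0 hw,
      spectrum_map_ofReal hsym]
    simp only [Set.mem_union, Set.mem_image, exists_exists_and_eq_and]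
    grind
  have hre : ∀ μ ∈ spectrum ℂ M, μ.re = 1 := by
    intro μ hμ
    obtain ⟨lam, -, rfl | rfl⟩ := (hspec μ).mp hμ <;> simp [w]
  have h0 : (0 : ℂ) ∉ spectrum ℂ M := fun h => by simpa using hre 0 h
  refine ⟨fun μ => by simp only [hspec, w, mul_assoc], h0, ?_⟩
  simpa [spectrum.zero_mem_iff] using h0

theorem block_matrix_spectrum (n : ℕ) (L : Matrix (Fin n) (Fin n) ℝ)
    (hsym : L.transpose = L) (hpsd : ∀ x : Fin n → ℝ, 0 ≤ x ⬝ᵥ L.mulVec x)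
    (c d : ℝ) (hc : 0 < c) (hd : 0 < d) :
    let Lc : Matrix (Fin n) (Fin n) ℂ := L.map (Complex.ofReal)
    let M : Matrix (Fin n ⊕ Fin n) (Fin n ⊕ Fin n) ℂ :=
      Matrix.fromBlocks 1 ((c : ℂ) • Lc) (-((d : ℂ) • Lc)) 1
    (∀ μ : ℂ, μ ∈ spectrum ℂ M ↔
        ∃ lam : ℝ, lam ∈ spectrum ℝ L ∧
          (μ = 1 + Complex.I * (Real.sqrt (c * d) * lam) ∨
           μ = 1 - Complex.I * (Real.sqrt (c * d) * lam))) ∧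
      (0 : ℂ) ∉ spectrum ℂ M ∧ IsUnit M :=
  block_matrix_spectrum_general n L hsym c d hc hd
end
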